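/- Let N ≥ 1 and let F_N denote the free group on N generators. Then there exist an index set I, a function d : I → ℕ, and an injective ℂ-algebra homomorphism f from the group algebra ℂ[F_N] to the direct product ∏_{i ∈ I} M_{d(i)}(ℂ) of complex matrix algebras, which respects the star operations: f(x*) = f(x)* for all x ∈ ℂ[F_N]. -/

import Mathlib

/-- The star operation on the group algebra `ℂ[Γ]`, determined `ℂ`-antilinearly by
`g* = g⁻¹`: the star of the basis element at `g` with coefficient `a` is the basis
element at `g⁻¹` with coefficient the complex conjugate of `a`. -/
noncomputable def groupAlgebraStar (Γ : Type) [Group Γ]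
    (x : MonoidAlgebra ℂ Γ) : MonoidAlgebra ℂ Γ :=
  MonoidAlgebra.ofCoeff (Finsupp.mapDomain (fun g => g⁻¹)
    (Finsupp.mapRange (starRingEnd ℂ) (map_zero _) x.coeff))

theorem groupAlgebraStar_apply {Γ : Type} [Group Γ] (x : MonoidAlgebra ℂ Γ)
    (k : Γ) : (groupAlgebraStar Γ x).coeff k = starRingEnd ℂ (x.coeff k⁻¹) := by
  unfold groupAlgebraStar
  rw [MonoidAlgebra.coeff_ofCoeff]
  have : k = (fun g : Γ => g⁻¹) k⁻¹ := by simp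
  rw [this, Finsupp.mapDomain_apply (fun a b h => by simpa using h)]
  simp

theorem groupAlgebraStar_mapDomain {Γ G : Type} [Group Γ] [Group G]
    (φ : Γ →* G) (x : MonoidAlgebra ℂ Γ) :
    MonoidAlgebra.mapDomain φ (groupAlgebraStar Γ x)
      = groupAlgebraStar G (MonoidAlgebra.mapDomain φ x) := by
  apply MonoidAlgebra.ext
  unfold groupAlgebraStar
  simp only [MonoidAlgebra.coeff_mapDomain, MonoidAlgebra.coeff_ofCoeff]
  rw [← Finsupp.mapDomain_comp,
    show (⇑φ ∘ fun g : Γ => g⁻¹) = ((fun g : G => g⁻¹) ∘ ⇑φ) from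
      funext fun g => by simp,
    Finsupp.mapDomain_comp,
    Finsupp.mapDomain_mapRange _ _ _ _ (map_add (starRingEnd ℂ))]


section RegRep

variable (G : Type) [Group G] [Fintype G] [DecidableEq G]

/-- Permutation matrices of left translations, as a monoid hom. -/
def regRepMonoidHom : G →* Matrix G G ℂ where
  toFun g := Matrix.of fun a b => if a = g * b then 1 else 0
  map_one' := by
    ext a b
    simp [Matrix.one_apply]
  map_mul' g h := by
    ext a b
    simp only [Matrix.mul_apply, Matrix.of_apply]
    rw [Finset.sum_eq_single (h * b)]
    · simp [mul_assoc]
    · intro k _ hk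
      rw [if_neg hk, mul_zero]
    · simp

/-- The left regular representation of the group algebra of a finite group. -/
noncomputable def regRep : MonoidAlgebra ℂ G →ₐ[ℂ] Matrix G G ℂ :=
  MonoidAlgebra.lift ℂ (Matrix G G ℂ) G (regRepMonoidHom G)

theorem regRep_apply (x : MonoidAlgebra ℂ G) (a b : G) :
    regRep G x a b = x.coeff (a * b⁻¹) := by
  rw [regRep, MonoidAlgebra.lift_apply, Finsupp.sum]
  have hsum : ∀ f : G → Matrix G G ℂ, ∀ s : Finset G,
      (∑ g ∈ s, f g) a b = ∑ g ∈ s, f g a b := by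
    intro f s
    exact Matrix.sum_apply a b s f
  rw [hsum]
  have h1 : ∀ g : G, (x.coeff g • regRepMonoidHom G g) a b
      = if g = a * b⁻¹ then x.coeff g else 0 := by
    intro g
    rw [Matrix.smul_apply]
    show x.coeff g * (if a = g * b then (1:ℂ) else 0) = _
    by_cases h : g = a * b⁻¹
    · subst h
      simp
    · rw [if_neg h, if_neg, mul_zero]
      intro hh
      exact h (by rw [hh, mul_inv_cancel_right])
  rw [Finset.sum_congr rfl fun g _ => h1 g,
    Finset.sum_ite_eq' x.coeff.support (a * b⁻¹) (fun g => x.coeff g)]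
  split
  · rfl
  · rename_i hmem
    rw [Finsupp.notMem_support_iff.mp hmem]

theorem regRep_injective : Function.Injective (regRep G) := by
  intro x y h
  ext g
  have := congrFun (congrFun (congrArg (fun M => (M : Matrix G G ℂ)) h) g) 1
  simpa [regRep_apply] using this

theorem regRep_star (x : MonoidAlgebra ℂ G) :
    regRep G (groupAlgebraStar G x) = star (regRep G x) := by
  ext a b
  rw [regRep_apply, Matrix.star_apply, regRep_apply, groupAlgebraStar_apply]
  simp [mul_comm]

end RegRep


open FreeGroup

section Part1
variable {α : Type} [DecidableEq α]

theorem reduced_of_reduced_cons {x : α × Bool} {L : List (α × Bool)}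
    (h : reduce (x :: L) = x :: L) : reduce L = L := by
  rcases hL : reduce L with _ | ⟨y, ys⟩
  · rw [reduce.cons, hL] at h
    have : L = [] := by simpa using congrArg List.length h
    rw [this]
  · have hlen : (y :: ys).length ≤ L.length := by
      rw [← hL]; exact (reduce.red (L := L)).length_le
    rw [reduce.cons, hL] at h
    dsimp only at h
    split at h
    · have := congrArg List.length h
      simp at this hlen; omega
    · rw [List.cons.injEq] at h
      rw [← h.2] at hL; rw [← h.2]

def FreeGroup.Ball (α : Type) [DecidableEq α] (R : ℕ) : Type :=
  {g : FreeGroup α // g.toWord.length ≤ R}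

instance (R : ℕ) [Finite α] : Finite (FreeGroup.Ball α R) := by
  have : Set.Finite {g : FreeGroup α | g.toWord.length ≤ R} :=
    Set.Finite.preimage (f := (toWord : FreeGroup α → List (α × Bool)))
      (toWord_injective.injOn) (List.finite_length_le (α × Bool) R)
  exact this.to_subtype

noncomputable instance (R : ℕ) [Finite α] : Fintype (FreeGroup.Ball α R) :=
  Fintype.ofFinite _

instance (R : ℕ) : DecidableEq (FreeGroup.Ball α R) := Subtype.instDecidableEq
end Part1

section Part2
variable {α : Type} [DecidableEq α] [Finite α] {R : ℕ}

namespace FreeGroup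

/-- The partial bijection `g ↦ x_i g` between subsets of the ball, as an equiv. -/
def ballMulEquiv (i : α) (R : ℕ) :
    {g : Ball α R // ((of i) * g.1).toWord.length ≤ R} ≃
      {g : Ball α R // ((of i)⁻¹ * g.1).toWord.length ≤ R} where
  toFun g := ⟨⟨of i * g.1.1, g.2⟩, by
    simpa only [inv_mul_cancel_left] using g.1.2⟩
  invFun g := ⟨⟨(of i)⁻¹ * g.1.1, g.2⟩, by
    simpa only [mul_inv_cancel_left] using g.1.2⟩
  left_inv g := by
    apply Subtype.ext; apply Subtype.ext; simp
  right_inv g := by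
    apply Subtype.ext; apply Subtype.ext; simp

/-- Extension of the partial bijection to a permutation of the ball. -/
noncomputable def ballPerm (i : α) (R : ℕ) : Equiv.Perm (Ball α R) :=
  (Equiv.sumCompl (fun g : Ball α R => ((of i) * g.1).toWord.length ≤ R)).symm.trans
    ((Equiv.sumCongr (ballMulEquiv i R)
      (Fintype.equivOfCardEq (by
        rw [Fintype.card_subtype_compl, Fintype.card_subtype_compl,
          Fintype.card_congr (ballMulEquiv i R)]))).trans
      (Equiv.sumCompl (fun g : Ball α R => ((of i)⁻¹ * g.1).toWord.length ≤ R)))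

theorem ballPerm_apply (i : α) {g : Ball α R}
    (hg : ((of i) * g.1).toWord.length ≤ R) :
    ballPerm i R g = ⟨of i * g.1, hg⟩ := by
  have h1 : (Equiv.sumCompl
      (fun g : Ball α R => ((of i) * g.1).toWord.length ≤ R)).symm g =
      Sum.inl ⟨g, hg⟩ := Equiv.sumCompl_symm_apply_of_pos
        (p := fun g : Ball α R => ((of i) * g.1).toWord.length ≤ R) hg
  unfold ballPerm
  rw [Equiv.trans_apply, Equiv.trans_apply, h1]
  rfl

theorem ballPerm_inv_apply (i : α) {g : Ball α R}
    (hg : ((of i)⁻¹ * g.1).toWord.length ≤ R) :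
    (ballPerm i R)⁻¹ g = ⟨(of i)⁻¹ * g.1, hg⟩ := by
  rw [Equiv.Perm.inv_def]
  apply (Equiv.symm_apply_eq _).mpr
  have h1 : ((of i) * ((of i)⁻¹ * g.1)).toWord.length ≤ R := by
    simpa only [mul_inv_cancel_left] using g.2
  rw [ballPerm_apply i (g := ⟨(of i)⁻¹ * g.1, hg⟩) h1]
  apply Subtype.ext; simp

/-- The permutation representation of the free group on the ball of radius `R`. -/
noncomputable def ballHom (α : Type) [DecidableEq α] [Finite α] (R : ℕ) :
    FreeGroup α →* Equiv.Perm (Ball α R) :=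
  FreeGroup.lift (fun i => ballPerm i R)

/-- `1` as an element of the ball. -/
def ballOne (α : Type) [DecidableEq α] (R : ℕ) : Ball α R :=
  ⟨1, by simp [toWord_one]⟩

theorem ballHom_key : ∀ (L : List (α × Bool)) (hred : reduce L = L)
    (hlen : L.length ≤ R),
    ballHom α R (mk L) (ballOne α R) =
      ⟨mk L, by rw [toWord_mk, hred]; exact hlen⟩
  | [], _, _ => by
    apply Subtype.ext
    simp [ballOne, ← one_eq_mk]
    rfl
  | (i, b) :: L, hred, hlen => by
    have hred' : reduce L = L := reduced_of_reduced_cons hred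
    have hlen' : L.length ≤ R := by
      simp only [List.length_cons] at hlen; omega
    have ih := ballHom_key L hred' hlen'
    have hcons : ((i, b) :: L).length ≤ R := hlen
    cases b
    · -- inverse generator
      have hmk : mk ((i, false) :: L) = (of i)⁻¹ * mk L := by
        rw [show ((i, false) :: L) = [(i, false)] ++ L from rfl, ← mul_mk]
        congr 1
      have hq : ((of i)⁻¹ * mk L).toWord.length ≤ R := by
        rw [← hmk, toWord_mk, hred]; exact hlen
      apply Subtype.ext
      show ((ballHom α R) (mk ((i, false) :: L)) (ballOne α R)).val
        = mk ((i, false) :: L)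
      rw [hmk, MonoidHom.map_mul]
      simp only [Equiv.Perm.mul_apply]
      rw [ih]
      have hbi : ballHom α R ((of i)⁻¹) = (ballPerm i R)⁻¹ := by
        rw [MonoidHom.map_inv,
          show ballHom α R (of i) = ballPerm i R from FreeGroup.lift_apply_of]
      rw [hbi, ballPerm_inv_apply i (g := ⟨mk L, by rw [toWord_mk, hred']; exact hlen'⟩) hq]
    · -- positive generator
      have hmk : mk ((i, true) :: L) = of i * mk L := by
        rw [show ((i, true) :: L) = [(i, true)] ++ L from rfl, ← mul_mk]; rfl
      have hp : ((of i) * mk L).toWord.length ≤ R := by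
        rw [← hmk, toWord_mk, hred]; exact hlen
      apply Subtype.ext
      show ((ballHom α R) (mk ((i, true) :: L)) (ballOne α R)).val
        = mk ((i, true) :: L)
      rw [hmk, MonoidHom.map_mul]
      simp only [Equiv.Perm.mul_apply]
      rw [ih, show ballHom α R (of i) = ballPerm i R from FreeGroup.lift_apply_of,
        ballPerm_apply i (g := ⟨mk L, by rw [toWord_mk, hred']; exact hlen'⟩) hp]

/-- Separation: a nontrivial element of length `≤ R` acts nontrivially on the ball. -/
theorem ballHom_ne_one {g : FreeGroup α} (hg : g ≠ 1)
    (hlen : g.toWord.length ≤ R) : ballHom α R g ≠ 1 := by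
  intro h
  have h1 := ballHom_key (R := R) g.toWord (reduce_toWord g) hlen
  have h2 : (((ballHom α R) (mk g.toWord)) (ballOne α R)).val = mk g.toWord :=
    congrArg Subtype.val h1
  rw [mk_toWord] at h2
  rw [h] at h2
  apply hg
  exact h2.symm

end FreeGroup
end Part2


open FreeGroup in
/-- For every `N ≥ 1`, the group algebra `ℂ[F_N]` of the free group on `N` generators
(the CQG algebra `𝒪(𝕋⁺_N)` of the maximal torus of the free unitary group `U⁺_N`)
admits an injective, star-preserving `ℂ`-algebra homomorphism into a direct product
`∏ i, M_{d i}(ℂ)` of complex matrix algebras; i.e. the discrete quantum group dual to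
`𝕋⁺_N` is residually finite. -/
theorem freeGroupAlgebra_embeds_in_prod_matrix
    (N : ℕ) (hN : 1 ≤ N) :
    ∃ (I : Type) (d : I → ℕ)
      (f : MonoidAlgebra ℂ (FreeGroup (Fin N)) →ₐ[ℂ]
        ∀ i : I, Matrix (Fin (d i)) (Fin (d i)) ℂ),
      Function.Injective f ∧
        ∀ x, f (groupAlgebraStar (FreeGroup (Fin N)) x) = star (f x) := by
  classical
  set d : ℕ → ℕ := fun R => Fintype.card (Equiv.Perm (Ball (Fin N) R)) with hd
  set Φ : ∀ R : ℕ, MonoidAlgebra ℂ (FreeGroup (Fin N)) →ₐ[ℂ]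
      Matrix (Fin (d R)) (Fin (d R)) ℂ := fun R =>
    ((Matrix.reindexAlgEquiv ℂ ℂ
        (Fintype.equivFin (Equiv.Perm (Ball (Fin N) R)))).toAlgHom).comp
      ((regRep (Equiv.Perm (Ball (Fin N) R))).comp
        (MonoidAlgebra.mapDomainAlgHom ℂ ℂ (ballHom (Fin N) R))) with hΦ
  refine ⟨ℕ, d, Pi.algHom ℂ _ Φ, ?_, ?_⟩
  · -- injectivity
    rw [injective_iff_map_eq_zero]
    intro x hx
    by_contra hne
    set S := x.coeff.support with hS
    set R := 2 * S.sup (fun g => g.toWord.length) with hR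
    have hinj : Set.InjOn (ballHom (Fin N) R) S := by
      intro g hg h hh hgh
      by_contra hne2
      have hgh1 : g * h⁻¹ ≠ 1 := by
        intro h1
        exact hne2 (by rwa [mul_inv_eq_one] at h1)
      have hlen : (g * h⁻¹).toWord.length ≤ R := by
        have h1 : (g * h⁻¹).toWord.length ≤ g.toWord.length + h.toWord.length := by
          have := FreeGroup.norm_mul_le g h⁻¹
          simpa [FreeGroup.norm, FreeGroup.norm_inv_eq] using this
        have h2 : g.toWord.length ≤ S.sup (fun g => g.toWord.length) :=
          Finset.le_sup (f := fun g : FreeGroup (Fin N) => g.toWord.length) hg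
        have h3 : h.toWord.length ≤ S.sup (fun g => g.toWord.length) :=
          Finset.le_sup (f := fun g : FreeGroup (Fin N) => g.toWord.length) hh
        omega
      refine ballHom_ne_one hgh1 hlen ?_
      rw [MonoidHom.map_mul, MonoidHom.map_inv, hgh, mul_inv_cancel]
    have hmd : Finsupp.mapDomain (ballHom (Fin N) R) x.coeff ≠ 0 := by
      intro h0
      refine hne ?_
      rw [← MonoidAlgebra.coeff_eq_zero]
      refine Finsupp.mapDomain_injOn (S : Set (FreeGroup (Fin N))) hinj
        ?_ ?_ ?_
      · exact fun g hg => hg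
      · intro g hg
        simp at hg
      · rw [h0, Finsupp.mapDomain_zero]
    refine hmd ?_
    have hcomp := congrFun hx R
    have : Φ R x = 0 := hcomp
    rw [hΦ] at this
    simp only [AlgHom.coe_comp, Function.comp_apply, AlgEquiv.toAlgHom_eq_coe,
      AlgHom.coe_coe] at this
    have h2 : regRep (Equiv.Perm (Ball (Fin N) R))
        ((MonoidAlgebra.mapDomainAlgHom ℂ ℂ (ballHom (Fin N) R)) x) = 0 := by
      have := congrArg (Matrix.reindexAlgEquiv ℂ ℂ
        (Fintype.equivFin (Equiv.Perm (Ball (Fin N) R)))).symm this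
      simpa using this
    have h3 := regRep_injective _ (h2.trans (map_zero _).symm)
    simpa only [MonoidAlgebra.mapDomainAlgHom_apply, MonoidAlgebra.coeff_mapDomain,
      MonoidAlgebra.coeff_zero] using congrArg MonoidAlgebra.coeff h3
  · -- star preservation
    intro x
    funext R
    show Φ R (groupAlgebraStar (FreeGroup (Fin N)) x) = star ((Pi.algHom ℂ _ Φ) x R)
    have hstar : ∀ (n : Type) (_ : Fintype n) (_ : DecidableEq n)
        (e : n ≃ Fin (Fintype.card n)) (M : Matrix n n ℂ),
        Matrix.reindexAlgEquiv ℂ ℂ e (star M)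
          = star (Matrix.reindexAlgEquiv ℂ ℂ e M) := by
      intro n _ _ e M
      rw [Matrix.reindexAlgEquiv_apply, Matrix.reindexAlgEquiv_apply,
        Matrix.reindex_apply, Matrix.reindex_apply,
        Matrix.star_eq_conjTranspose, Matrix.star_eq_conjTranspose,
        Matrix.conjTranspose_submatrix]
    simp only [hΦ, AlgHom.coe_comp, Function.comp_apply, AlgEquiv.toAlgHom_eq_coe,
      AlgHom.coe_coe, Pi.algHom_apply]
    rw [show ((MonoidAlgebra.mapDomainAlgHom ℂ ℂ (ballHom (Fin N) R))
        (groupAlgebraStar (FreeGroup (Fin N)) x))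
        = MonoidAlgebra.mapDomain (ballHom (Fin N) R)
          (groupAlgebraStar (FreeGroup (Fin N)) x) by rw [MonoidAlgebra.mapDomainAlgHom_apply],
      groupAlgebraStar_mapDomain, regRep_star]
    exact hstar _ _ _ _ _
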